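/- In the standard form N-cube Adinkra, every two-colored 4-cycle has an odd number of dashed edges: for i < j and any vertex v ∈ (Z/2)^N, the sum π_i(v) + π_j(v + e_i) + π_i(v + e_j) + π_j(v) is odd, where π_i(x) = x_1 + x_2 + ⋯ + x_{i−1} (mod 2). -/

import Mathlib

/-- Standard form edge parity on the N-cube: `π i v = ∑_{l < i} v l` (mod 2). -/
def stdParity {N : ℕ} (i : Fin N) (v : Fin N → ZMod 2) : ZMod 2 :=
  ∑ l ∈ Finset.univ.filter (fun l => l < i), v l

/-! Flipping coordinate `k` changes `π i` exactly when `k < i`; around the square the two flips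
contribute `π j (e i) + π i (e j) = 1 + 0`, and each `π i v`, `π j v` occurs twice. -/

namespace stdParity

variable {N : ℕ}

lemma add (i : Fin N) (v w : Fin N → ZMod 2) :
    stdParity i (v + w) = stdParity i v + stdParity i w :=
  Finset.sum_add_distrib

lemma single (i k : Fin N) (c : ZMod 2) :
    stdParity i (Pi.single k c) = if k < i then c else 0 := by
  simp [stdParity, Finset.sum_pi_single']

end stdParity

/-- Every two-colored 4-cycle of the standard form N-cube Adinkra has an odd
number of dashed edges. -/
theorem std_four_cycle_odd (N : ℕ) (i j : Fin N) (hij : i < j) (v : Fin N → ZMod 2) :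
    stdParity i v + stdParity j (v + Pi.single i 1) +
      stdParity i (v + Pi.single j 1) + stdParity j v = (1 : ZMod 2) := by
  rw [stdParity.add, stdParity.add, stdParity.single, stdParity.single,
    if_pos hij, if_neg hij.not_gt]
  calc stdParity i v + (stdParity j v + 1) + (stdParity i v + 0) + stdParity j v
      = 1 + ((stdParity i v + stdParity j v) + (stdParity i v + stdParity j v)) := by ring
    _ = 1 := by rw [CharTwo.add_self_eq_zero, add_zero]
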